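/- arXiv:2202.06025 — 2 statements merged into one kernel-verified Lean document; each statement's English description precedes it below -/
import Mathlib

section
/- The iterated integral over the region {(x_1,x_2,x_3) : 0 ≤ x_3, x_1+x_2+x_3 ≤ d, computed as in the notched case with parameter v (0 ≤ v ≤ d/4)} — namely the sum of the six iterated integrals: ∫_0^v∫_{d-3x_1}^{d-x_1}∫_{(d-x_1-x_2)/2}^{d-x_1-x_2}, ∫_v^{d-3v}∫_{d-x_1-2v}^{d-x_1}∫_{(d-x_1-x_2)/2}^{d-x_1-x_2}, ∫_{d-3v}^{d}∫_{(d-x_1)/3}^{d-x_1}∫_{(d-x_1-x_2)/2}^{d-x_1-x_2}, ∫_v^{d-3v}∫_v^{d-x_1-2v}∫_{d-x_1-x_2-v}^{d-x_1-x_2}, ∫_0^v∫_{x_1}^{d-3x_1}∫_{d-2x_1-x_2}^{d-x_1-x_2}, and ∫_0^v∫_{x_2}^{d-3x_2}∫_{d-x_1-2x_2}^{d-x_1-x_2}, each with integrand (d-x_1-x_2-x_3) — equals 2v^4 - (4d/3)v^3 + (d^2/4)v^2. -/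
/-!
Each of the six terms is an iterated integral of a polynomial between polynomial bounds, so it
is evaluated in closed form innermost integral first, every step being an instance of
`∫ x in a..b, (c - x) ^ n = ((c - a) ^ (n + 1) - (c - b) ^ (n + 1)) / (n + 1)`.
The six values are `v⁴/12`, `(d - 4v) v³/3`, `v⁴/4`, `v² (d - 4v)²/4` and twice `d v³/6 - v⁴/2`,
which add up to the right-hand side.
-/

open intervalIntegral

theorem integral_const_sub_pow (c a b : ℝ) (n : ℕ) :
    ∫ x in a..b, (c - x) ^ n = ((c - a) ^ (n + 1) - (c - b) ^ (n + 1)) / (n + 1) := by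
  rw [integral_comp_sub_left (fun x => x ^ n), integral_pow]

theorem integral_const_sub (c a b : ℝ) :
    ∫ x in a..b, (c - x) = ((c - a) ^ 2 - (c - b) ^ 2) / 2 := by
  rw [integral_comp_sub_left (fun x => x), integral_id]

theorem integral_half_const_sub (c : ℝ) : ∫ x in c / 2..c, (c - x) = c ^ 2 / 8 := by
  rw [integral_const_sub]; ring

theorem integral_strip_const_sub (c w : ℝ) : ∫ x in c - w..c, (c - x) = w ^ 2 / 2 := by
  rw [integral_const_sub]; ring

section NotchedTerms

variable (d v : ℝ)

theorem notched_integral_term₁ :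
    (∫ x1 in (0:ℝ)..v, ∫ x2 in (d - 3*x1)..(d - x1),
        ∫ x3 in ((d - x1 - x2)/2)..(d - x1 - x2), (d - x1 - x2 - x3)) = v ^ 4 / 12 := by
  have slice : ∀ x1 : ℝ, (∫ x2 in (d - 3*x1)..(d - x1),
      ∫ x3 in ((d - x1 - x2)/2)..(d - x1 - x2), (d - x1 - x2 - x3)) = x1 ^ 3 / 3 := by
    intro x1
    simp only [integral_half_const_sub, integral_div, integral_const_sub_pow]
    ring
  simp only [slice, integral_div, integral_pow]
  ring

theorem notched_integral_term₂ :
    (∫ x1 in v..(d - 3*v), ∫ x2 in (d - x1 - 2*v)..(d - x1),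
        ∫ x3 in ((d - x1 - x2)/2)..(d - x1 - x2), (d - x1 - x2 - x3)) = (d - 4 * v) * v ^ 3 / 3 := by
  have slice : ∀ x1 : ℝ, (∫ x2 in (d - x1 - 2*v)..(d - x1),
      ∫ x3 in ((d - x1 - x2)/2)..(d - x1 - x2), (d - x1 - x2 - x3)) = v ^ 3 / 3 := by
    intro x1
    simp only [integral_half_const_sub, integral_div, integral_const_sub_pow]
    ring
  simp only [slice, integral_const, smul_eq_mul]
  ring

theorem notched_integral_term₃ :
    (∫ x1 in (d - 3*v)..d, ∫ x2 in ((d - x1)/3)..(d - x1),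
        ∫ x3 in ((d - x1 - x2)/2)..(d - x1 - x2), (d - x1 - x2 - x3)) = v ^ 4 / 4 := by
  have slice : ∀ x1 : ℝ, (∫ x2 in ((d - x1)/3)..(d - x1),
      ∫ x3 in ((d - x1 - x2)/2)..(d - x1 - x2), (d - x1 - x2 - x3)) = (d - x1) ^ 3 / 81 := by
    intro x1
    simp only [integral_half_const_sub, integral_div, integral_const_sub_pow]
    ring
  simp only [slice, integral_div, integral_const_sub_pow]
  ring

theorem notched_integral_term₄ :
    (∫ x1 in v..(d - 3*v), ∫ x2 in v..(d - x1 - 2*v),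
        ∫ x3 in (d - x1 - x2 - v)..(d - x1 - x2), (d - x1 - x2 - x3))
      = v ^ 2 * (d - 4 * v) ^ 2 / 4 := by
  have slice : ∀ x1 : ℝ, (∫ x2 in v..(d - x1 - 2*v),
      ∫ x3 in (d - x1 - x2 - v)..(d - x1 - x2), (d - x1 - x2 - x3))
        = v ^ 2 / 2 * (d - 3 * v - x1) := by
    intro x1
    simp only [integral_strip_const_sub, integral_const, smul_eq_mul]
    ring
  simp only [slice]
  simp only [integral_const_mul, integral_const_sub]
  ring

theorem notched_integral_term₅ :
    (∫ x1 in (0:ℝ)..v, ∫ x2 in x1..(d - 3*x1),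
        ∫ x3 in (d - 2*x1 - x2)..(d - x1 - x2), (d - x1 - x2 - x3))
      = d * v ^ 3 / 6 - v ^ 4 / 2 := by
  have slice : ∀ x1 : ℝ, (∫ x2 in x1..(d - 3*x1),
      ∫ x3 in (d - 2*x1 - x2)..(d - x1 - x2), (d - x1 - x2 - x3))
        = d / 2 * x1 ^ 2 - 2 * x1 ^ 3 := by
    intro x1
    have fibre : ∀ x2 : ℝ,
        ∫ x3 in (d - 2*x1 - x2)..(d - x1 - x2), (d - x1 - x2 - x3) = x1 ^ 2 / 2 := by
      intro x2; rw [integral_const_sub]; ring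
    simp only [fibre, integral_const, smul_eq_mul]
    ring
  simp only [slice]
  simp only [intervalIntegrable_pow, IntervalIntegrable.const_mul, integral_sub,
    integral_const_mul, integral_pow]
  ring

theorem notched_integral_term₆ :
    (∫ x2 in (0:ℝ)..v, ∫ x1 in x2..(d - 3*x2),
        ∫ x3 in (d - x1 - 2*x2)..(d - x1 - x2), (d - x1 - x2 - x3))
      = d * v ^ 3 / 6 - v ^ 4 / 2 := by
  have slice : ∀ x2 : ℝ, (∫ x1 in x2..(d - 3*x2),
      ∫ x3 in (d - x1 - 2*x2)..(d - x1 - x2), (d - x1 - x2 - x3))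
        = d / 2 * x2 ^ 2 - 2 * x2 ^ 3 := by
    intro x2
    have fibre : ∀ x1 : ℝ,
        ∫ x3 in (d - x1 - 2*x2)..(d - x1 - x2), (d - x1 - x2 - x3) = x2 ^ 2 / 2 := by
      intro x1; rw [integral_const_sub]; ring
    simp only [fibre, integral_const, smul_eq_mul]
    ring
  simp only [slice]
  simp only [intervalIntegrable_pow, IntervalIntegrable.const_mul, integral_sub,
    integral_const_mul, integral_pow]
  ring

end NotchedTerms

theorem notched_integral_general (d v : ℝ) :
    (∫ x1 in (0:ℝ)..v, ∫ x2 in (d - 3*x1)..(d - x1),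
        ∫ x3 in ((d - x1 - x2)/2)..(d - x1 - x2), (d - x1 - x2 - x3)) +
    (∫ x1 in v..(d - 3*v), ∫ x2 in (d - x1 - 2*v)..(d - x1),
        ∫ x3 in ((d - x1 - x2)/2)..(d - x1 - x2), (d - x1 - x2 - x3)) +
    (∫ x1 in (d - 3*v)..d, ∫ x2 in ((d - x1)/3)..(d - x1),
        ∫ x3 in ((d - x1 - x2)/2)..(d - x1 - x2), (d - x1 - x2 - x3)) +
    (∫ x1 in v..(d - 3*v), ∫ x2 in v..(d - x1 - 2*v),
        ∫ x3 in (d - x1 - x2 - v)..(d - x1 - x2), (d - x1 - x2 - x3)) +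
    (∫ x1 in (0:ℝ)..v, ∫ x2 in x1..(d - 3*x1),
        ∫ x3 in (d - 2*x1 - x2)..(d - x1 - x2), (d - x1 - x2 - x3)) +
    (∫ x2 in (0:ℝ)..v, ∫ x1 in x2..(d - 3*x2),
        ∫ x3 in (d - x1 - 2*x2)..(d - x1 - x2), (d - x1 - x2 - x3))
      = 2 * v^4 - (4 * d / 3) * v^3 + (d^2 / 4) * v^2 := by
  rw [notched_integral_term₁, notched_integral_term₂, notched_integral_term₃,
    notched_integral_term₄, notched_integral_term₅, notched_integral_term₆]
  ring

theorem notched_integral (d v : ℝ) (hv0 : 0 ≤ v) (hv : v ≤ d / 4) :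
    (∫ x1 in (0:ℝ)..v, ∫ x2 in (d - 3*x1)..(d - x1),
        ∫ x3 in ((d - x1 - x2)/2)..(d - x1 - x2), (d - x1 - x2 - x3)) +
    (∫ x1 in v..(d - 3*v), ∫ x2 in (d - x1 - 2*v)..(d - x1),
        ∫ x3 in ((d - x1 - x2)/2)..(d - x1 - x2), (d - x1 - x2 - x3)) +
    (∫ x1 in (d - 3*v)..d, ∫ x2 in ((d - x1)/3)..(d - x1),
        ∫ x3 in ((d - x1 - x2)/2)..(d - x1 - x2), (d - x1 - x2 - x3)) +
    (∫ x1 in v..(d - 3*v), ∫ x2 in v..(d - x1 - 2*v),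
        ∫ x3 in (d - x1 - x2 - v)..(d - x1 - x2), (d - x1 - x2 - x3)) +
    (∫ x1 in (0:ℝ)..v, ∫ x2 in x1..(d - 3*x1),
        ∫ x3 in (d - 2*x1 - x2)..(d - x1 - x2), (d - x1 - x2 - x3)) +
    (∫ x2 in (0:ℝ)..v, ∫ x1 in x2..(d - 3*x2),
        ∫ x3 in (d - x1 - 2*x2)..(d - x1 - x2), (d - x1 - x2 - x3))
      = 2 * v^4 - (4 * d / 3) * v^3 + (d^2 / 4) * v^2 :=
  notched_integral_general d v
end

section
/- For all real d > 0 and all v ∈ [0, d/4], d^4/24 - (d-4v)^4/24 - 4(2v^4 - (4d/3)v^3 + (d^2/4)v^2) ≤ 11 d^4/343, and in particular d^4/32 ≤ 11 d^4/343. -/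
/-!
The deficit `11 d⁴/343 - V(v)` is the polynomial `(7v - d)² (8 (7v - 2d)² + d²) / 1029`,
a product of squares; so the bound holds for every real `v`, with equality exactly at `v = d/7`.
The second claim is `1/32 < 11/343`.
-/

/-- The upper bound on the volume of a notched Cayley tile with notch `(v,v,v,v)` and
M-diameter `d`. -/
noncomputable def notchedVolume (d v : ℝ) : ℝ :=
  d^4 / 24 - (d - 4 * v)^4 / 24 - 4 * (2 * v^4 - (4 * d / 3) * v^3 + (d^2 / 4) * v^2)

theorem sub_notchedVolume_eq (d v : ℝ) :
    11 * d^4 / 343 - notchedVolume d v = (7 * v - d)^2 * (8 * (7 * v - 2 * d)^2 + d^2) / 1029 := by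
  unfold notchedVolume
  ring

theorem notchedVolume_le (d v : ℝ) : notchedVolume d v ≤ 11 * d^4 / 343 := by
  have h : 0 ≤ 11 * d^4 / 343 - notchedVolume d v := by
    rw [sub_notchedVolume_eq]
    positivity
  linarith

theorem notched_volume_bound_general (d : ℝ) :
    (∀ v : ℝ, 0 ≤ v → v ≤ d / 4 →
      d^4 / 24 - (d - 4 * v)^4 / 24
          - 4 * (2 * v^4 - (4 * d / 3) * v^3 + (d^2 / 4) * v^2)
        ≤ 11 * d^4 / 343) ∧
    d^4 / 32 ≤ 11 * d^4 / 343 := by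
  refine ⟨fun v _ _ => notchedVolume_le d v, ?_⟩
  have hd4 : 0 ≤ d^4 := by positivity
  linarith

theorem notched_volume_bound (d : ℝ) (hd : 0 < d) :
    (∀ v : ℝ, 0 ≤ v → v ≤ d / 4 →
      d^4 / 24 - (d - 4 * v)^4 / 24
          - 4 * (2 * v^4 - (4 * d / 3) * v^3 + (d^2 / 4) * v^2)
        ≤ 11 * d^4 / 343) ∧
    d^4 / 32 ≤ 11 * d^4 / 343 :=
  notched_volume_bound_general d
end
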